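/- arXiv:1608.03297 — 9 statements merged into one kernel-verified Lean document; each statement's English description precedes it below -/
import Mathlib

section
/- The set of fundamental holes of the semigroup Q(A) is finite. -/
open Matrix

/-- The affine semigroup generated by the columns of `A`. -/
def semigroupQ {m n : ℕ} (A : Matrix (Fin m) (Fin n) ℤ) : Set (Fin m → ℤ) :=
  {b | ∃ x : Fin n → ℕ, b = A.mulVec fun j => (x j : ℤ)}

/-- The real cone generated by the columns of `A`. -/
def realCone {m n : ℕ} (A : Matrix (Fin m) (Fin n) ℤ) (v : Fin m → ℝ) : Prop :=
  ∃ x : Fin n → ℝ, (∀ j, 0 ≤ x j) ∧ v = (A.map fun z => (z : ℝ)).mulVec x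

/-- The lattice generated by the columns of `A`. -/
def latticeL {m n : ℕ} (A : Matrix (Fin m) (Fin n) ℤ) : Set (Fin m → ℤ) :=
  {b | ∃ x : Fin n → ℤ, b = A.mulVec x}

/-- The saturation `K(A) ∩ L(A)` of the semigroup `Q(A)`. -/
def satQ {m n : ℕ} (A : Matrix (Fin m) (Fin n) ℤ) : Set (Fin m → ℤ) :=
  {b | realCone A (fun i => (b i : ℝ)) ∧ b ∈ latticeL A}

/-- The set of holes `H = Q_sat \ Q`. -/
def holes {m n : ℕ} (A : Matrix (Fin m) (Fin n) ℤ) : Set (Fin m → ℤ) :=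
  satQ A \ semigroupQ A

/-- A hole `h` is fundamental if there is no other hole `h'` with `h - h' ∈ Q`. -/
def IsFundamentalHole {m n : ℕ} (A : Matrix (Fin m) (Fin n) ℤ) (h : Fin m → ℤ) : Prop :=
  h ∈ holes A ∧ ∀ h' ∈ holes A, h' ≠ h → h - h' ∉ semigroupQ A

/-- The cone `K(A)` is pointed: it contains no lines. -/
def ConePointed {m n : ℕ} (A : Matrix (Fin m) (Fin n) ℤ) : Prop :=
  ∀ v : Fin m → ℝ, realCone A v → v ≠ 0 → ¬ realCone A (-v)

/-- The set of fundamental holes of the semigroup `Q(A)` is finite. -/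
theorem fundamental_holes_finite {m n : ℕ} (A : Matrix (Fin m) (Fin n) ℤ)
    (hA : ConePointed A) :
    {h : Fin m → ℤ | IsFundamentalHole A h}.Finite := by
  classical
  -- Every fundamental hole has a representation with coefficients in [0,1).
  have key : ∀ h : Fin m → ℤ, IsFundamentalHole A h →
      ∃ x : Fin n → ℝ, (∀ j, 0 ≤ x j ∧ x j < 1) ∧
        (fun i => (h i : ℝ)) = (A.map fun z => (z : ℝ)).mulVec x := by
    intro h hh
    obtain ⟨⟨⟨x, hx0, hxeq⟩, hL⟩, hQ⟩ := hh.1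
    set k : Fin n → ℕ := fun j => ⌊x j⌋₊ with hk
    set g : Fin m → ℤ := A.mulVec (fun j => (k j : ℤ)) with hg
    have hx' : ∀ j, 0 ≤ x j - k j ∧ x j - k j < 1 := by
      intro j
      refine ⟨by have := Nat.floor_le (hx0 j); linarith,
        by have := Nat.lt_floor_add_one (x j); linarith⟩
    have hcast : (fun i => (((h - g) : Fin m → ℤ) i : ℝ)) =
        (A.map fun z => (z : ℝ)).mulVec (fun j => x j - (k j : ℝ)) := by
      funext i
      have h1 := congrFun hxeq i
      simp only [Matrix.mulVec, dotProduct, Matrix.map_apply] at h1 ⊢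
      simp only [Pi.sub_apply, hg, Matrix.mulVec, dotProduct]
      push_cast
      rw [h1, ← Finset.sum_sub_distrib]
      exact Finset.sum_congr rfl fun j _ => by ring
    have hgQ : g ∈ semigroupQ A := ⟨k, rfl⟩
    have hholes : (h - g) ∈ holes A := by
      refine ⟨⟨⟨fun j => x j - (k j : ℝ), fun j => (hx' j).1, hcast⟩, ?_⟩, ?_⟩
      · obtain ⟨y, hy⟩ := hL
        exact ⟨y - fun j => (k j : ℤ), by rw [Matrix.mulVec_sub, ← hy, hg]⟩
      · rintro ⟨z, hz⟩
        apply hQ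
        refine ⟨fun j => z j + k j, ?_⟩
        have : h = A.mulVec (fun j => (z j : ℤ)) + g := by
          rw [← hz]; abel
        rw [this, hg, ← Matrix.mulVec_add]
        congr 1
    by_cases heq : h - g = h
    · refine ⟨fun j => x j - (k j : ℝ), hx', ?_⟩
      rw [heq] at hcast
      exact hcast
    · exfalso
      apply hh.2 (h - g) hholes heq
      have : h - (h - g) = g := by abel
      rw [this]; exact hgQ
  -- Bound: fundamental holes lie in a box.
  set C : Fin m → ℤ := fun i => ∑ j, |A i j| with hC
  apply Set.Finite.subset (Set.finite_Icc (-C) C)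
  intro h hh
  obtain ⟨x, hx, heq⟩ := key h hh
  have hb : ∀ i, |h i| ≤ C i := by
    intro i
    have h1 := congrFun heq i
    simp only [Matrix.mulVec, dotProduct, Matrix.map_apply] at h1
    have h2 : |(h i : ℝ)| ≤ ∑ j, |(A i j : ℝ)| := by
      rw [h1]
      calc |∑ j, (A i j : ℝ) * x j| ≤ ∑ j, |(A i j : ℝ) * x j| :=
            Finset.abs_sum_le_sum_abs _ _
        _ ≤ ∑ j, |(A i j : ℝ)| := by
            refine Finset.sum_le_sum fun j _ => ?_
            rw [abs_mul]
            have h3 := (hx j).1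
            have h4 := (hx j).2
            have h5 : |x j| ≤ 1 := by rw [abs_of_nonneg h3]; linarith
            nlinarith [abs_nonneg ((A i j : ℝ))]
    have h6 : |(h i : ℝ)| ≤ ((C i : ℤ) : ℝ) := by
      rw [hC]; push_cast; exact h2
    exact_mod_cast (by rw [← Int.cast_abs] at h6; exact_mod_cast h6 : |h i| ≤ C i)
  rw [Set.mem_Icc]
  constructor <;> intro i <;> have := abs_le.mp (hb i)
  · simpa using this.1
  · exact this.2
end

section
/- Every fundamental hole of Q(A) lies in the half-open parallelepiped P = {Σ λ_i a_i : 0 ≤ λ_i < 1}. -/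
open Matrix

/-- A single column of `A` belongs to the semigroup. -/
lemma col_mem_semigroupQ {m n : ℕ} (A : Matrix (Fin m) (Fin n) ℤ) (j : Fin n) :
    (fun i => A i j) ∈ semigroupQ A := by
  classical
  refine ⟨fun j' => if j' = j then 1 else 0, ?_⟩
  funext i
  simp [mulVec, dotProduct, apply_ite (fun z : ℕ => (z : ℤ)), mul_ite, Finset.sum_ite_eq']

/-- Every fundamental hole of `Q(A)` lies in the half-open parallelepiped
`P = {Σ lam_i a_i : 0 ≤ lam_i < 1}`. -/
theorem fundamental_hole_mem_parallelepiped {m n : ℕ} (A : Matrix (Fin m) (Fin n) ℤ)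
    (hA : ConePointed A) (h : Fin m → ℤ) (hh : IsFundamentalHole A h) :
    ∃ lam : Fin n → ℝ, (∀ j, 0 ≤ lam j ∧ lam j < 1) ∧
      (fun i => (h i : ℝ)) = (A.map fun z => (z : ℝ)).mulVec lam := by
  classical
  obtain ⟨⟨⟨⟨x, hx0, hxeq⟩, hlat⟩, hnotQ⟩, hfund⟩ := hh
  -- zero out coefficients on zero columns
  set lam : Fin n → ℝ := fun j => if (fun i => A i j) = (0 : Fin m → ℤ) then 0 else x j with hlam
  have hlam0 : ∀ j, 0 ≤ lam j := by
    intro j; simp only [hlam]; split <;> [exact le_refl 0; exact hx0 j]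
  have hlameq : (fun i => (h i : ℝ)) = (A.map fun z => (z : ℝ)).mulVec lam := by
    rw [hxeq]
    funext i
    simp only [mulVec, dotProduct, map_apply]
    refine Finset.sum_congr rfl fun j _ => ?_
    simp only [hlam]
    split
    · rename_i hz
      have : A i j = 0 := congrFun hz i
      simp [this]
    · rfl
  by_cases hall : ∀ j, lam j < 1
  · exact ⟨lam, fun j => ⟨hlam0 j, hall j⟩, hlameq⟩
  · exfalso
    push_neg at hall
    obtain ⟨j, hj1⟩ := hall
    have hcolnz : (fun i => A i j) ≠ (0 : Fin m → ℤ) := by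
      intro hz
      simp only [hlam, if_pos hz] at hj1
      linarith
    have hlamx : lam j = x j := by simp [hlam, if_neg hcolnz]
    rw [hlamx] at hj1
    set h' : Fin m → ℤ := h - fun i => A i j with hh'
    -- h' is in the real cone
    have hcone' : realCone A (fun i => (h' i : ℝ)) := by
      refine ⟨fun j' => lam j' - (if j' = j then 1 else 0), fun j' => ?_, ?_⟩
      · dsimp only
        split
        · rename_i he; subst he; rw [hlamx]; linarith
        · simpa using hlam0 j'
      · funext i
        have hi := congrFun hlameq i
        simp only [hh', Pi.sub_apply, Int.cast_sub, mulVec, dotProduct, map_apply,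
          mul_sub, Finset.sum_sub_distrib, mul_ite, mul_one, mul_zero,
          Finset.sum_ite_eq', Finset.mem_univ, if_true]
        simp only [mulVec, dotProduct, map_apply] at hi
        rw [hi]
    -- h' is in the lattice
    have hlat' : h' ∈ latticeL A := by
      obtain ⟨y, hy⟩ := hlat
      refine ⟨y - fun j' => if j' = j then 1 else 0, ?_⟩
      funext i
      simp only [hh', Pi.sub_apply, hy, mulVec, dotProduct, mul_sub,
        Finset.sum_sub_distrib, mul_ite, mul_one, mul_zero,
        Finset.sum_ite_eq', Finset.mem_univ, if_true]
    -- h' is not in Q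
    have hnotQ' : h' ∉ semigroupQ A := by
      rintro ⟨z, hz⟩
      apply hnotQ
      refine ⟨z + fun j' => if j' = j then 1 else 0, ?_⟩
      have : h = h' + fun i => A i j := by
        funext i; simp [hh']
      rw [this, hz]
      funext i
      simp [mulVec, dotProduct, mul_add, Finset.sum_add_distrib, mul_ite,
        Finset.sum_ite_eq', apply_ite (fun z : ℕ => (z : ℤ))]
    have hne : h' ≠ h := by
      intro he
      apply hcolnz
      funext i
      have := congrFun he i
      simp only [hh', Pi.sub_apply] at this
      simp only [Pi.zero_apply]
      omega
    exact hfund h' ⟨⟨hcone', hlat'⟩, hnotQ'⟩ hne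
      (by
        have : h - h' = fun i => A i j := by funext i; simp [hh']
        rw [this]; exact col_mem_semigroupQ A j)
end

section
/- For f ∈ Q_sat and λ ∈ ℤ_{≥0}^n, the vector f + Aλ is not a hole (i.e., f + Aλ ∈ Q) if and only if there exist a ≤-minimal solution (λ₀, μ₀) of f + Aλ₀ = Aμ₀ with λ₀ ≤ λ. -/
open Matrix

/-- For `f ∈ Q_sat` and nonnegative integral `lam`, the vector `f + A lam` is not a
hole (i.e. `f + A lam ∈ Q`) if and only if there exists a coordinatewise-minimal
solution `(lam₀, mu₀)` of `f + A lam₀ = A mu₀` with `lam₀ ≤ lam`. -/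
theorem not_hole_iff_minimal_solution_le {m n : ℕ} (A : Matrix (Fin m) (Fin n) ℤ)
    (f : Fin m → ℤ) (hf : f ∈ satQ A) (lam : Fin n → ℕ) :
    (f + A.mulVec (fun j => (lam j : ℤ))) ∈ semigroupQ A ↔
      ∃ lam₀ mu₀ : Fin n → ℕ,
        f + A.mulVec (fun j => (lam₀ j : ℤ)) = A.mulVec (fun j => (mu₀ j : ℤ)) ∧
        (∀ lam' mu' : Fin n → ℕ,
          f + A.mulVec (fun j => (lam' j : ℤ)) = A.mulVec (fun j => (mu' j : ℤ)) →
          (lam', mu') ≤ (lam₀, mu₀) → (lam', mu') = (lam₀, mu₀)) ∧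
        lam₀ ≤ lam := by
  constructor
  · rintro ⟨mu, hmu⟩
    -- set of solutions below (lam, mu)
    set S : Set ((Fin n → ℕ) × (Fin n → ℕ)) :=
      {p | f + A.mulVec (fun j => (p.1 j : ℤ)) = A.mulVec (fun j => (p.2 j : ℤ)) ∧
        p ≤ (lam, mu)} with hS
    have hne : S.Nonempty := ⟨(lam, mu), hmu, le_refl _⟩
    set N : ((Fin n → ℕ) × (Fin n → ℕ)) → ℕ :=
      fun p => (∑ j, p.1 j) + (∑ j, p.2 j) with hN
    obtain ⟨k, ⟨p, hpS, hpk⟩, hkmin⟩ :=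
      (Nat.lt_wfRel.wf).has_min (N '' S) (hne.image N)
    refine ⟨p.1, p.2, hpS.1, ?_, hpS.2.1⟩
    intro lam' mu' hsol hle
    have hmem : (lam', mu') ∈ S := ⟨hsol, le_trans hle hpS.2⟩
    have h1 : ∀ j ∈ Finset.univ, lam' j ≤ p.1 j := fun j _ => hle.1 j
    have h2 : ∀ j ∈ Finset.univ, mu' j ≤ p.2 j := fun j _ => hle.2 j
    have hNle : N (lam', mu') ≤ N p := by
      exact Nat.add_le_add (Finset.sum_le_sum h1) (Finset.sum_le_sum h2)
    have hNge : ¬ N (lam', mu') < k := hkmin _ ⟨(lam', mu'), hmem, rfl⟩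
    have hNeq : N (lam', mu') = N p := le_antisymm hNle (by omega)
    have hs1 : ∑ j, lam' j = ∑ j, p.1 j := by
      have := Finset.sum_le_sum h1
      have := Finset.sum_le_sum h2
      simp only [hN] at hNeq
      omega
    have hs2 : ∑ j, mu' j = ∑ j, p.2 j := by
      simp only [hN] at hNeq
      omega
    have e1 : lam' = p.1 := funext fun j =>
      ((Finset.sum_eq_sum_iff_of_le h1).mp hs1) j (Finset.mem_univ j)
    have e2 : mu' = p.2 := funext fun j =>
      ((Finset.sum_eq_sum_iff_of_le h2).mp hs2) j (Finset.mem_univ j)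
    exact Prod.ext e1 e2
  · rintro ⟨lam₀, mu₀, hsol, -, hle⟩
    refine ⟨fun j => mu₀ j + (lam j - lam₀ j), ?_⟩
    have hcast : (fun j => ((mu₀ j + (lam j - lam₀ j) : ℕ) : ℤ)) =
        (fun j => (mu₀ j : ℤ)) + ((fun j => (lam j : ℤ)) - fun j => (lam₀ j : ℤ)) := by
      funext j
      have := hle j
      simp only [Pi.add_apply, Pi.sub_apply]
      push_cast [Nat.cast_sub this]
      ring
    rw [hcast, Matrix.mulVec_add, Matrix.mulVec_sub, ← hsol]
    abel
end

section
/- For k < l in [d], the vector h_{kl} = (a_{ll} + a_{lk} + a_{kl} + a_{kk})/2 is an integer vector lying in the cone K(A) generated by the columns of the CDEM matrix A, hence h_{kl} ∈ Q_sat. -/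
open Finset

/-- The column `a_{ij}` of the CDEM matrix: 1 in coordinate `j`, 1 in coordinate
`d + i`, 1 in coordinate `2d` (the last one) iff `i = j`, and 0 elsewhere
(coordinates are 0-based). -/
def acol (d : ℕ) (i j : Fin d) : Fin (2 * d + 1) → ℤ := fun t =>
  (if (t : ℕ) = (j : ℕ) then 1 else 0) +
  (if (t : ℕ) = d + (i : ℕ) then 1 else 0) +
  (if (t : ℕ) = 2 * d ∧ i = j then 1 else 0)

/-- The vector `h_{kl} = (a_{ll} + a_{lk} + a_{kl} + a_{kk}) / 2`. -/
def hvec (d : ℕ) (k l : Fin d) : Fin (2 * d + 1) → ℤ := fun t =>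
  (acol d l l t + acol d l k t + acol d k l t + acol d k k t) / 2

/-- The CDEM semigroup: nonnegative integer combinations of the columns. -/
def cdemQ (d : ℕ) : Set (Fin (2 * d + 1) → ℤ) :=
  {b | ∃ x : Fin d → Fin d → ℕ, b = fun t => ∑ i, ∑ j, (x i j : ℤ) * acol d i j t}

/-- The real cone `K(A)` generated by the CDEM columns. -/
def cdemCone (d : ℕ) (v : Fin (2 * d + 1) → ℝ) : Prop :=
  ∃ x : Fin d → Fin d → ℝ, (∀ i j, 0 ≤ x i j) ∧
    v = fun t => ∑ i, ∑ j, x i j * (acol d i j t : ℝ)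

/-- The saturation `Q_sat = K(A) ∩ ℤ^{2d+1}` of the CDEM semigroup. -/
def cdemQsat (d : ℕ) : Set (Fin (2 * d + 1) → ℤ) :=
  {b | cdemCone d fun t => (b t : ℝ)}

/-- The `i`-th coordinate (0-based, `i < d`) as an index into `Fin (2d+1)`. -/
def idx1 (d : ℕ) (i : Fin d) : Fin (2 * d + 1) := ⟨(i : ℕ), by have := i.isLt; omega⟩

/-- The `(d+i)`-th coordinate as an index into `Fin (2d+1)`. -/
def idx2 (d : ℕ) (i : Fin d) : Fin (2 * d + 1) := ⟨d + (i : ℕ), by have := i.isLt; omega⟩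

lemma sum_delta_pair {d : ℕ} (k l : Fin d) (hkl : k ≠ l) (f : Fin d → ℝ) :
    ∑ i, ((if i = k then (1:ℝ) else 0) + (if i = l then 1 else 0)) * f i = f k + f l := by
  simp [add_mul, Finset.sum_add_distrib, Finset.sum_ite_eq']

/-- For `k < l`, the vector `h_{kl} = (a_{ll} + a_{lk} + a_{kl} + a_{kk})/2` is an
integer vector lying in the cone `K(A)`, hence `h_{kl} ∈ Q_sat`. -/
theorem hvec_mem_Qsat (d : ℕ) (hd : 2 ≤ d) (k l : Fin d) (hkl : k < l) :
    (∀ t, 2 * hvec d k l t = acol d l l t + acol d l k t + acol d k l t + acol d k k t) ∧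
    hvec d k l ∈ cdemQsat d := by
  have hne : k ≠ l := Fin.ne_of_lt hkl
  have hne' : (k : ℕ) ≠ (l : ℕ) := fun h => hne (Fin.ext h)
  have heven : ∀ t, Even (acol d l l t + acol d l k t + acol d k l t + acol d k k t) := by
    intro t
    simp only [acol, hne, hne'.symm, and_true, and_false, if_false]
    split_ifs <;> simp_all <;> omega
  have h1 : ∀ t, 2 * hvec d k l t
      = acol d l l t + acol d l k t + acol d k l t + acol d k k t := by
    intro t
    exact Int.two_mul_ediv_two_of_even (heven t)
  refine ⟨h1, ?_⟩
  refine ⟨fun i j => (1/2) * (((if i = k then (1:ℝ) else 0) + (if i = l then 1 else 0))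
      * ((if j = k then (1:ℝ) else 0) + (if j = l then 1 else 0))), ?_, ?_⟩
  · intro i j; positivity
  · funext t
    have hv : (hvec d k l t : ℝ)
        = (1/2) * ((acol d l l t : ℝ) + acol d l k t + acol d k l t + acol d k k t) := by
      have := h1 t
      have : ((2 * hvec d k l t : ℤ) : ℝ)
          = ((acol d l l t + acol d l k t + acol d k l t + acol d k k t : ℤ) : ℝ) := by
        rw [this]
      push_cast at this
      linarith
    rw [hv]
    have hsum : ∑ i, ∑ j, ((1/2) * (((if i = k then (1:ℝ) else 0) + (if i = l then 1 else 0))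
        * ((if j = k then (1:ℝ) else 0) + (if j = l then 1 else 0)))) * (acol d i j t : ℝ)
        = (1/2) * ∑ i, ((if i = k then (1:ℝ) else 0) + (if i = l then 1 else 0))
            * ∑ j, ((if j = k then (1:ℝ) else 0) + (if j = l then 1 else 0)) * (acol d i j t : ℝ) := by
      rw [Finset.mul_sum]
      refine Finset.sum_congr rfl fun i _ => ?_
      rw [Finset.mul_sum, Finset.mul_sum]
      refine Finset.sum_congr rfl fun j _ => ?_
      ring
    rw [hsum, sum_delta_pair k l hne]
    rw [sum_delta_pair k l hne, sum_delta_pair k l hne]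
    ring
end

section
/- For k < l in [d], the vector h_{kl} = (a_{ll} + a_{lk} + a_{kl} + a_{kk})/2 is not a nonnegative integer combination of the columns a_{ij} of the CDEM matrix, i.e., h_{kl} ∉ Q(A). -/
open Finset

/-! A representation `h_{kl} = ∑ x_{ij} a_{ij}` with `x ≥ 0` prescribes the row and column sums of
the matrix `x` to be the indicator of `{k, l}`, so `x` vanishes outside the `{k, l} × {k, l}` block,
where `x_kk + x_kl = 1 = x_kl + x_ll`. Hence the trace `x_kk + x_ll = 2 (1 - x_kl)` is even, while the
last coordinate of `h_{kl}` forces it to be `1`. -/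

section Coordinates

variable {d : ℕ}

lemma acol_idx1 (i j m : Fin d) : acol d i j (idx1 d m) = if m = j then 1 else 0 := by
  have h1 : (m : ℕ) ≠ d + i := by omega
  have h2 : (m : ℕ) ≠ 2 * d := by omega
  simp [acol, idx1, h1, h2, Fin.val_eq_val]

lemma acol_idx2 (i j m : Fin d) : acol d i j (idx2 d m) = if m = i then 1 else 0 := by
  have h1 : d + (m : ℕ) ≠ j := by omega
  have h2 : d + (m : ℕ) ≠ 2 * d := by omega
  simp [acol, idx2, h1, h2, Fin.val_eq_val]

lemma acol_last (i j : Fin d) : acol d i j (Fin.last (2 * d)) = if i = j then 1 else 0 := by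
  have h1 : 2 * d ≠ (j : ℕ) := by omega
  have h2 : 2 * d ≠ d + (i : ℕ) := by omega
  simp [acol, h1, h2]

lemma sum_mul_acol_idx1 (x : Fin d → Fin d → ℤ) (m : Fin d) :
    ∑ i, ∑ j, x i j * acol d i j (idx1 d m) = ∑ i, x i m := by
  simp [acol_idx1]

lemma sum_mul_acol_idx2 (x : Fin d → Fin d → ℤ) (m : Fin d) :
    ∑ i, ∑ j, x i j * acol d i j (idx2 d m) = ∑ j, x m j := by
  simp [acol_idx2]

lemma sum_mul_acol_last (x : Fin d → Fin d → ℤ) :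
    ∑ i, ∑ j, x i j * acol d i j (Fin.last (2 * d)) = ∑ i, x i i := by
  simp [acol_last]

variable {k l : Fin d}

lemma hvec_idx1 (hkl : k ≠ l) (m : Fin d) :
    hvec d k l (idx1 d m) = (if m = k then 1 else 0) + (if m = l then 1 else 0) := by
  simp only [hvec, acol_idx1]
  by_cases hmk : m = k <;> by_cases hml : m = l <;> simp_all

lemma hvec_idx2 (hkl : k ≠ l) (m : Fin d) :
    hvec d k l (idx2 d m) = (if m = k then 1 else 0) + (if m = l then 1 else 0) := by
  simp only [hvec, acol_idx2]
  by_cases hmk : m = k <;> by_cases hml : m = l <;> simp_all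

lemma hvec_last (hkl : k ≠ l) : hvec d k l (Fin.last (2 * d)) = 1 := by
  simp [hvec, acol_last, hkl, hkl.symm]

end Coordinates

theorem even_sum_diag_of_row_col_sums {ι : Type*} [Fintype ι] [DecidableEq ι]
    {x : ι → ι → ℤ} (hx : ∀ i j, 0 ≤ x i j) {k l : ι} (hkl : k ≠ l)
    (hrow : ∀ i, ∑ j, x i j = (if i = k then 1 else 0) + (if i = l then 1 else 0))
    (hcol : ∀ j, ∑ i, x i j = (if j = k then 1 else 0) + (if j = l then 1 else 0)) :
    Even (∑ i, x i i) := by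
  have row_zero : ∀ i, i ≠ k ∧ i ≠ l → ∀ j, x i j = 0 := fun i hi j => by
    have h := hrow i
    rw [if_neg hi.1, if_neg hi.2, add_zero, Finset.sum_eq_zero_iff_of_nonneg fun j _ => hx i j] at h
    exact h j (Finset.mem_univ j)
  have col_zero : ∀ j, j ≠ k ∧ j ≠ l → ∀ i, x i j = 0 := fun j hj i => by
    have h := hcol j
    rw [if_neg hj.1, if_neg hj.2, add_zero, Finset.sum_eq_zero_iff_of_nonneg fun i _ => hx i j] at h
    exact h i (Finset.mem_univ i)
  have row_k : x k k + x k l = 1 := by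
    simpa [Fintype.sum_eq_add k l hkl fun j hj => col_zero j hj k, hkl] using hrow k
  have col_l : x k l + x l l = 1 := by
    simpa [Fintype.sum_eq_add k l hkl fun i hi => row_zero i hi l, hkl.symm] using hcol l
  rw [Fintype.sum_eq_add k l hkl fun i hi => row_zero i hi i]
  exact ⟨1 - x k l, by linarith⟩

theorem hvec_not_mem_Q_general (d : ℕ) (k l : Fin d) (hkl : k < l) :
    hvec d k l ∉ cdemQ d := by
  rintro ⟨x, hx⟩
  have hne := hkl.ne
  have htrace : Even (∑ i, (x i i : ℤ)) :=
    even_sum_diag_of_row_col_sums (fun i j => (x i j).cast_nonneg) hne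
      (fun m => by rw [← hvec_idx2 hne, congrFun hx, sum_mul_acol_idx2])
      (fun m => by rw [← hvec_idx1 hne, congrFun hx, sum_mul_acol_idx1])
  rw [← sum_mul_acol_last fun i j => (x i j : ℤ), ← congrFun hx, hvec_last hne] at htrace
  exact Int.not_even_one htrace

/-- For `k < l`, the vector `h_{kl}` is not a nonnegative integer combination of the
columns of the CDEM matrix, i.e. `h_{kl} ∉ Q(A)`. -/
theorem hvec_not_mem_Q (d : ℕ) (hd : 2 ≤ d) (k l : Fin d) (hkl : k < l) :
    hvec d k l ∉ cdemQ d :=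
  hvec_not_mem_Q_general d k l hkl
end

section
/- For distinct pairs {i,j} and {k,l} with i<j, k<l, the identity h_{ij} + h_{kl} = a_{kk} + a_{ll} + a_{ij} + a_{ji} holds; in particular the sum of two fundamental holes of the CDEM semigroup is not a hole. -/
open Finset

/-- For distinct pairs `{i,j}` and `{k,l}` with `i < j`, `k < l`, we have
`h_{ij} + h_{kl} = a_{kk} + a_{ll} + a_{ij} + a_{ji}`; in particular the sum of two
fundamental holes of the CDEM semigroup is not a hole. -/
theorem sum_of_two_holes_not_hole (d : ℕ) (hd : 2 ≤ d) (i j k l : Fin d)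
    (hij : i < j) (hkl : k < l) (hne : (i, j) ≠ (k, l)) :
    (∀ t, hvec d i j t + hvec d k l t =
      acol d k k t + acol d l l t + acol d i j t + acol d j i t) ∧
    (fun t => hvec d i j t + hvec d k l t) ∈ cdemQ d := by
  have hmain : ∀ t, hvec d i j t + hvec d k l t =
      acol d k k t + acol d l l t + acol d i j t + acol d j i t := by
    intro t
    simp only [hvec, acol, hij.ne, hij.ne', hkl.ne, hkl.ne', and_true, and_false,
      if_false]
    split_ifs <;> omega
  refine ⟨hmain, ?_⟩
  refine ⟨fun a b => (if a = k ∧ b = k then 1 else 0) + (if a = l ∧ b = l then 1 else 0)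
    + (if a = i ∧ b = j then 1 else 0) + (if a = j ∧ b = i then 1 else 0), ?_⟩
  funext t
  rw [hmain t]
  push_cast
  simp only [add_mul, Finset.sum_add_distrib, ite_mul, one_mul, zero_mul, ite_and]
  simp [Finset.sum_ite_eq, Finset.sum_ite_eq']
end

section
/- For k < l and any pair (i,j) with i ≠ j and i ∉ {k,l}: if j ≠ l then h_{kl} + a_{ij} = a_{kk} + a_{il} + a_{lj}, and if j = l then h_{kl} + a_{ij} = a_{ll} + a_{kl} + a_{ik}; in either case h_{kl} + a_{ij} ∈ Q(A). -/
open Finset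

lemma acol_triple_mem (d : ℕ) (p1 q1 p2 q2 p3 q3 : Fin d) :
    (fun t => acol d p1 q1 t + acol d p2 q2 t + acol d p3 q3 t) ∈ cdemQ d := by
  refine ⟨fun a b => (if a = p1 then if b = q1 then 1 else 0 else 0) +
    (if a = p2 then if b = q2 then 1 else 0 else 0) +
    (if a = p3 then if b = q3 then 1 else 0 else 0), ?_⟩
  funext t
  push_cast
  simp only [add_mul, Finset.sum_add_distrib, ite_mul, zero_mul, one_mul]
  have H : ∀ p q : Fin d,
      (∑ a : Fin d, ∑ b : Fin d, if a = p then if b = q then acol d a b t else 0 else 0)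
      = acol d p q t := by
    intro p q
    rw [Finset.sum_eq_single p]
    · simp
    · intro b _ hb; simp [hb]
    · simp
  rw [H, H, H]

/-- For `k < l` and `(i,j)` with `i ≠ j` and `i ∉ {k,l}`: if `j ≠ l` then
`h_{kl} + a_{ij} = a_{kk} + a_{il} + a_{lj}`, and if `j = l` then
`h_{kl} + a_{ij} = a_{ll} + a_{kl} + a_{ik}`; in either case `h_{kl} + a_{ij} ∈ Q(A)`. -/
theorem hvec_add_offdiag_not_hole (d : ℕ) (hd : 2 ≤ d) (k l i j : Fin d)
    (hkl : k < l) (hij : i ≠ j) (hik : i ≠ k) (hil : i ≠ l) :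
    (j ≠ l → ∀ t, hvec d k l t + acol d i j t =
      acol d k k t + acol d i l t + acol d l j t) ∧
    (j = l → ∀ t, hvec d k l t + acol d i j t =
      acol d l l t + acol d k l t + acol d i k t) ∧
    (fun t => hvec d k l t + acol d i j t) ∈ cdemQ d := by
  have case1 : ∀ (hjl : j ≠ l) (t : Fin (2*d+1)), hvec d k l t + acol d i j t =
      acol d k k t + acol d i l t + acol d l j t := by
    intro hjl t
    have h1 : (k:ℕ) ≠ l := fun h => hkl.ne (Fin.ext h)
    have h2 : (i:ℕ) ≠ j := fun h => hij (Fin.ext h)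
    have h3 : (i:ℕ) ≠ k := fun h => hik (Fin.ext h)
    have h4 : (i:ℕ) ≠ l := fun h => hil (Fin.ext h)
    have h5 : (j:ℕ) ≠ l := fun h => hjl (Fin.ext h)
    have hlj : l ≠ j := fun h => hjl h.symm
    have ht := t.isLt
    have hk := k.isLt
    have hl := l.isLt
    simp only [acol, hvec, hij, hkl.ne, hkl.ne', hlj, hil, and_true, and_false, if_false,
      if_true, eq_self_iff_true]
    split_ifs <;> omega
  have case2 : ∀ (hjl : j = l) (t : Fin (2*d+1)), hvec d k l t + acol d i j t =
      acol d l l t + acol d k l t + acol d i k t := by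
    intro hjl t
    subst hjl
    have h1 : (k:ℕ) ≠ j := fun h => hkl.ne (Fin.ext h)
    have h3 : (i:ℕ) ≠ k := fun h => hik (Fin.ext h)
    have h4 : (i:ℕ) ≠ j := fun h => hij (Fin.ext h)
    have ht := t.isLt
    have hk := k.isLt
    have hl := j.isLt
    have hi := i.isLt
    simp only [acol, hvec, hij, hik, hkl.ne, hkl.ne', and_true, and_false, if_false,
      if_true, eq_self_iff_true]
    split_ifs <;> omega
  refine ⟨case1, case2, ?_⟩
  by_cases hjl : j = l
  · have : (fun t => hvec d k l t + acol d i j t) =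
        (fun t => acol d l l t + acol d k l t + acol d i k t) := funext (case2 hjl)
    rw [this]
    exact acol_triple_mem d l l k l i k
  · have : (fun t => hvec d k l t + acol d i j t) =
        (fun t => acol d k k t + acol d i l t + acol d l j t) := funext (case1 hjl)
    rw [this]
    exact acol_triple_mem d k k i l l j
end

section
/- For any k<l and k'<l' with {k,l} ≠ {k',l'} and d ≥ 3, the hole monoids intersect: there exist nonnegative integer combinations of diagonal columns a_{ii} witnessing h_{kl} + Σc_i a_{ii} = h_{k'l'} + Σc'_i a_{ii}. In particular for d = 3, h_{12} + a_{33} = h_{23} + a_{11}. -/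
open Finset

lemma hvec_eq (d : ℕ) (k l : Fin d) (h : k ≠ l) (t : Fin (2 * d + 1)) :
    hvec d k l t = (if (t:ℕ)=(k:ℕ) then 1 else 0)+(if (t:ℕ)=(l:ℕ) then 1 else 0)
      +(if (t:ℕ)=d+(k:ℕ) then 1 else 0)+(if (t:ℕ)=d+(l:ℕ) then 1 else 0)
      +(if (t:ℕ)=2*d then 1 else 0) := by
  simp only [hvec, acol, h, h.symm, and_true, and_false, if_false, eq_self_iff_true, if_true]
  split_ifs <;> omega

lemma acol_diag (d : ℕ) (a : Fin d) (t : Fin (2 * d + 1)) :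
    acol d a a t = (if (t:ℕ)=(a:ℕ) then 1 else 0)+(if (t:ℕ)=d+(a:ℕ) then 1 else 0)
      +(if (t:ℕ)=2*d then 1 else 0) := by
  simp [acol]

lemma sum_pair (d : ℕ) (a b : Fin d) (t : Fin (2 * d + 1)) :
    ∑ i, (((if i = a then 1 else 0) + (if i = b then 1 else 0) : ℕ) : ℤ) * acol d i i t
      = acol d a a t + acol d b b t := by
  push_cast
  simp only [add_mul, ite_mul, one_mul, zero_mul, Finset.sum_add_distrib,
    Finset.sum_ite_eq', Finset.mem_univ, if_true]

/-- For any `k < l` and `k' < l'` with `(k,l) ≠ (k',l')` (and `d ≥ 3`), the hole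
monoids intersect: there are nonnegative integer combinations of diagonal columns
witnessing `h_{kl} + Σ c_i a_{ii} = h_{k'l'} + Σ c'_i a_{ii}`. In particular for
`d = 3`, `h_{12} + a_{33} = h_{23} + a_{11}`. -/
theorem hole_monoids_intersect (d : ℕ) (hd : 3 ≤ d) (k l k' l' : Fin d)
    (hkl : k < l) (hkl' : k' < l') (hne : (k, l) ≠ (k', l')) :
    (∃ c c' : Fin d → ℕ, ∀ t,
      hvec d k l t + ∑ i, (c i : ℤ) * acol d i i t =
        hvec d k' l' t + ∑ i, (c' i : ℤ) * acol d i i t) ∧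
    (∀ t, hvec 3 0 1 t + acol 3 2 2 t = hvec 3 1 2 t + acol 3 0 0 t) := by
  constructor
  · refine ⟨fun i => (if i = k' then 1 else 0) + (if i = l' then 1 else 0),
      fun i => (if i = k then 1 else 0) + (if i = l then 1 else 0), fun t => ?_⟩
    rw [sum_pair d k' l' t, sum_pair d k l t,
      hvec_eq d k l hkl.ne t, hvec_eq d k' l' hkl'.ne t,
      acol_diag, acol_diag, acol_diag, acol_diag]
    ring
  · decide
end

section
/- Let z ∈ ℤ_{≥0}^{2d} with Σ_{i=1}^d z_i = Σ_{i=1}^d z_{d+i} = S and z_i + z_{d+i} ≤ S for all i ∈ [d]. Then z can be written as a nonnegative integer combination Σ_{i≠j} λ_{ij} e_{ij}, where e_{ij} ∈ ℤ^{2d} is the 0/1-vector with 1 in coordinates j and d+i. -/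
open Finset

/-- The 0/1-vector `e_{ij} ∈ ℤ_{≥0}^{2d}` with 1 in coordinates `j` and `d + i`
(0-based). -/
def evec (d : ℕ) (i j : Fin d) : Fin (2 * d) → ℕ := fun t =>
  (if (t : ℕ) = (j : ℕ) then 1 else 0) + (if (t : ℕ) = d + (i : ℕ) then 1 else 0)

/-!
With `a k = z_k` and `b k = z_{d+k}`, we need a nonnegative integer matrix with zero diagonal,
column sums `a` and row sums `b`. Induct on `S`, removing one unit from `a j` and from `b i` for
some `i ≠ j`. The bound `a k + b k ≤ S` survives exactly when every tight index
(`a k + b k = S + 1`) is among `i, j`. Take `j` with `a j > 0`, then `i ≠ j` with `b i > 0`, each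
maximising `a + b`. A tight index missed by these choices would make one of them tight as well,
and since `∑ (a k + b k) = 2S + 2`, two tight indices leave nothing for the other choice.
-/

section

variable {ι : Type*} [DecidableEq ι]

theorem exists_eq_add_single_of_pos {f : ι → ℕ} {j : ι} (hj : 0 < f j) :
    ∃ g : ι → ℕ, f = g + Pi.single j 1 :=
  ⟨f - Pi.single j 1, by
    ext k
    rcases eq_or_ne k j with rfl | hk
    · simp only [Pi.add_apply, Pi.sub_apply, Pi.single_eq_same]; omega
    · simp [hk]⟩

variable [Fintype ι]

theorem add_add_le_sum {M : Type*} [AddCommMonoid M] [PartialOrder M] [IsOrderedAddMonoid M]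
    [CanonicallyOrderedAdd M] (f : ι → M) {k l m : ι} (hkl : k ≠ l) (hkm : k ≠ m) (hlm : l ≠ m) :
    f k + f l + f m ≤ ∑ x, f x := by
  have hk : k ∉ ({l, m} : Finset ι) := by simp [hkl, hkm]
  calc f k + f l + f m = ∑ x ∈ {k, l, m}, f x := by
        rw [sum_insert hk, sum_pair hlm, add_assoc]
    _ ≤ ∑ x, f x := sum_le_sum_of_subset (subset_univ _)

theorem exists_pair_covering_tight (a b : ι → ℕ) (S : ℕ) (ha : ∑ k, a k = S + 1)
    (hb : ∑ k, b k = S + 1) (hab : ∀ k, a k + b k ≤ S + 1) :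
    ∃ i j, i ≠ j ∧ 0 < b i ∧ 0 < a j ∧ ∀ k, k ≠ i → k ≠ j → a k + b k ≤ S := by
  have hc : ∑ k, (a k + b k) = 2 * S + 2 := by rw [sum_add_distrib, ha, hb]; ring
  obtain ⟨j, hj, hj_max⟩ := exists_max_image {k | 0 < a k} (fun k => a k + b k) <| by
    obtain ⟨j, -, hj⟩ := exists_ne_zero_of_sum_ne_zero (ha.trans_ne S.succ_ne_zero)
    exact ⟨j, by simpa [Nat.pos_iff_ne_zero] using hj⟩
  rw [mem_filter_univ] at hj
  obtain ⟨i, hi, hi_max⟩ := exists_max_image {k | k ≠ j ∧ 0 < b k} (fun k => a k + b k) <| by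
    have hbj : b j + ∑ k ∈ univ.erase j, b k = S + 1 := (add_sum_erase _ _ (mem_univ j)).trans hb
    have hpos : ∑ k ∈ univ.erase j, b k ≠ 0 := by have := hab j; omega
    obtain ⟨i, hi, hi'⟩ := exists_ne_zero_of_sum_ne_zero hpos
    exact ⟨i, by simpa [Nat.pos_iff_ne_zero] using ⟨ne_of_mem_erase hi, hi'⟩⟩
  rw [mem_filter_univ] at hi
  refine ⟨i, j, hi.1, hi.2, hj, fun k hki hkj => ?_⟩
  by_contra! htight
  rcases Nat.eq_zero_or_pos (a k) with hak | hak
  · have := hi_max k ((mem_filter_univ k).mpr ⟨hkj, by omega⟩)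
    have : a i + b i + (a k + b k) + (a j + b j) ≤ ∑ k, (a k + b k) :=
      add_add_le_sum (fun k => a k + b k) hki.symm hi.1 hkj
    omega
  · have := hj_max k (by simpa using hak)
    have : a j + b j + (a k + b k) + (a i + b i) ≤ ∑ k, (a k + b k) :=
      add_add_le_sum (fun k => a k + b k) (Ne.symm hkj) hi.1.symm hki
    omega

theorem exists_offDiag_matrix_with_sums (a b : ι → ℕ) (S : ℕ) (ha : ∑ k, a k = S)
    (hb : ∑ k, b k = S) (hab : ∀ k, a k + b k ≤ S) :
    ∃ lam : ι → ι → ℕ, (∀ i, lam i i = 0) ∧ (∀ j, ∑ i, lam i j = a j) ∧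
      ∀ i, ∑ j, lam i j = b i := by
  induction S generalizing a b with
  | zero =>
    refine ⟨0, fun _ => rfl, fun j => ?_, fun i => ?_⟩
    · simp [sum_eq_zero_iff.mp ha j (mem_univ j)]
    · simp [sum_eq_zero_iff.mp hb i (mem_univ i)]
  | succ S ih =>
    obtain ⟨i, j, hij, hbi, haj, hrest⟩ := exists_pair_covering_tight a b S ha hb hab
    obtain ⟨a, rfl⟩ := exists_eq_add_single_of_pos haj
    obtain ⟨b, rfl⟩ := exists_eq_add_single_of_pos hbi
    simp only [Pi.add_apply, sum_add_distrib, sum_pi_single', mem_univ, if_true] at ha hb hab hrest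
    have hab' : ∀ k, a k + b k ≤ S := by
      intro k
      by_cases hki : k = i
      · subst hki
        have := hab k
        rw [Pi.single_eq_same, Pi.single_eq_of_ne hij] at this
        omega
      by_cases hkj : k = j
      · subst hkj
        have := hab k
        rw [Pi.single_eq_same, Pi.single_eq_of_ne hij.symm] at this
        omega
      simpa [hki, hkj] using hrest k hki hkj
    obtain ⟨lam, hdiag, hcol, hrow⟩ := ih a b (by omega) (by omega) hab'
    refine ⟨lam + Pi.single i (Pi.single j 1), fun k => ?_, fun k => ?_, fun k => ?_⟩
    · by_cases hki : k = i
      · subst hki; simp [hdiag, hij]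
      · simp [hdiag, hki]
    · simp [sum_add_distrib, hcol, Pi.single_apply, ite_apply]
    · simp [sum_add_distrib, hrow, Pi.single_apply, ite_apply]

end

def firstHalf (d : ℕ) (m : Fin d) : Fin (2 * d) := ⟨m, by omega⟩

def secondHalf (d : ℕ) (m : Fin d) : Fin (2 * d) := ⟨d + m, by omega⟩

theorem evec_firstHalf (d : ℕ) (i j m : Fin d) :
    evec d i j (firstHalf d m) = if m = j then 1 else 0 := by
  have : (m : ℕ) ≠ d + i := by omega
  simp [evec, firstHalf, this, Fin.val_eq_val]

theorem evec_secondHalf (d : ℕ) (i j m : Fin d) :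
    evec d i j (secondHalf d m) = if m = i then 1 else 0 := by
  have : d + (m : ℕ) ≠ j := by omega
  simp [evec, secondHalf, this, Fin.val_eq_val]

theorem eq_firstHalf_or_eq_secondHalf {d : ℕ} (t : Fin (2 * d)) :
    (∃ m, t = firstHalf d m) ∨ ∃ m, t = secondHalf d m := by
  by_cases ht : (t : ℕ) < d
  · exact .inl ⟨⟨t, ht⟩, rfl⟩
  · exact .inr ⟨⟨t - d, by omega⟩, Fin.ext (by simp only [secondHalf]; omega)⟩

/-- Let `z ∈ ℤ_{≥0}^{2d}` with `Σ_{i=1}^d z_i = Σ_{i=1}^d z_{d+i} = S` and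
`z_i + z_{d+i} ≤ S` for all `i ∈ [d]`. Then `z` is a nonnegative integer combination
`Σ_{i ≠ j} lam_{ij} e_{ij}`. -/
theorem proper_matching (d : ℕ) (z : Fin (2 * d) → ℕ) (S : ℕ)
    (h1 : ∑ i : Fin d, z ⟨(i : ℕ), by have := i.isLt; omega⟩ = S)
    (h2 : ∑ i : Fin d, z ⟨d + (i : ℕ), by have := i.isLt; omega⟩ = S)
    (h3 : ∀ i : Fin d,
      z ⟨(i : ℕ), by have := i.isLt; omega⟩ + z ⟨d + (i : ℕ), by have := i.isLt; omega⟩ ≤ S) :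
    ∃ lam : Fin d → Fin d → ℕ, (∀ i, lam i i = 0) ∧
      z = fun t => ∑ i, ∑ j, lam i j * evec d i j t := by
  obtain ⟨lam, hdiag, hcol, hrow⟩ := exists_offDiag_matrix_with_sums
    (fun m => z (firstHalf d m)) (fun m => z (secondHalf d m)) S h1 h2 h3
  refine ⟨lam, hdiag, funext fun t => ?_⟩
  rcases eq_firstHalf_or_eq_secondHalf t with ⟨m, rfl⟩ | ⟨m, rfl⟩
  · simp [evec_firstHalf, hcol]
  · simp [evec_secondHalf, hrow]
end
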